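/- Fix R ⊆ E with |R| = ⌊n/2⌋ and define g_R(S) = g(S) for S ≠ R, g_R(R) = 1, where g(S) = (2|S|/n)ε if |S| ≤ ⌊n/2⌋ and g(S) = 2(|S|−⌊n/2⌋) otherwise, with 0 < ε ≤ n/(n+2). Then g_R is supermodular. -/

import Mathlib

/-!
Writing k = ⌊n/2⌋ and q = 2ε/n, one has g(S) = h(|S|) for the convex function
h(x) = max(q x, 2(x - k)); the bound on ε is what makes the two affine pieces switch between
k and k + 1. A convex function of the cardinality is supermodular, because |S ∩ T| ≤ |S|, |T| ≤
|S ∪ T| and |S| + |T| = |S ∪ T| + |S ∩ T|. Raising the value at R from h(k) to 1 can only break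
the inequality for pairs (R, T) with T incomparable to R; then |R ∩ T| < k < |R ∪ T|, so the
segment from |R ∩ T| to |R ∪ T| straddles the kink of h, and the slope jump there pays for the 1.
-/

open Finset

def IsSupermodular {β M : Type*} [Lattice β] [Add M] [LE M] (f : β → M) : Prop :=
  ∀ a b, f a + f b ≤ f (a ⊔ b) + f (a ⊓ b)

theorem IsSupermodular.update {β M : Type*} [Lattice β] [DecidableEq β] [AddCommMonoid M]
    [PartialOrder M] [IsOrderedAddMonoid M] {f : β → M} (hf : IsSupermodular f) {r : β} {v : M}
    (hle : f r ≤ v)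
    (hinc : ∀ b, ¬ b ≤ r → ¬ r ≤ b → v + f b ≤ f (r ⊔ b) + f (r ⊓ b)) :
    IsSupermodular (Function.update f r v) := by
  have hle_update : ∀ a, f a ≤ Function.update f r v a := by
    intro a
    rcases eq_or_ne a r with rfl | ha
    · simpa using hle
    · rw [Function.update_of_ne ha]
  have hr_left : ∀ b, Function.update f r v r + Function.update f r v b ≤
      Function.update f r v (r ⊔ b) + Function.update f r v (r ⊓ b) := by
    intro b
    by_cases hbr : b ≤ r
    · rw [sup_eq_left.2 hbr, inf_eq_right.2 hbr]
    by_cases hrb : r ≤ b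
    · rw [sup_eq_right.2 hrb, inf_eq_left.2 hrb, add_comm]
    have hb : b ≠ r := fun h => hbr h.le
    have hsup : r ⊔ b ≠ r := fun h => hbr (sup_eq_left.1 h)
    have hinf : r ⊓ b ≠ r := fun h => hrb (inf_eq_left.1 h)
    simpa [hb, hsup, hinf] using hinc b hbr hrb
  intro a b
  by_cases ha : a = r
  · subst ha; exact hr_left b
  by_cases hb : b = r
  · subst hb; simpa only [add_comm, sup_comm, inf_comm] using hr_left a
  simp only [Function.update_of_ne ha, Function.update_of_ne hb]
  exact (hf a b).trans (add_le_add (hle_update _) (hle_update _))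

theorem ConvexOn.add_le_add_of_add_eq {s : Set ℝ} {f : ℝ → ℝ} (hf : ConvexOn ℝ s f)
    {a b c d : ℝ} (hc : c ∈ s) (hd : d ∈ s) (hda : d ≤ a) (hac : a ≤ c) (hsum : a + b = c + d) :
    f a + f b ≤ f c + f d := by
  rcases hac.eq_or_lt with rfl | hac'
  · obtain rfl : b = d := by linarith
    exact le_rfl
  have hcd : 0 < c - d := by linarith
  set t := (a - d) / (c - d)
  have ht0 : 0 ≤ t := div_nonneg (by linarith) hcd.le
  have ht1 : 0 ≤ 1 - t := by rw [sub_nonneg, div_le_one hcd]; linarith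
  have ha : a = (1 - t) • d + t • c := by simp only [t, smul_eq_mul]; field_simp; ring
  have hb : b = t • d + (1 - t) • c := by
    rw [show b = c + d - a by linarith]; simp only [t, smul_eq_mul]; field_simp; ring
  have h1 := hf.2 hd hc ht1 ht0 (by ring)
  have h2 := hf.2 hd hc ht0 ht1 (by ring)
  rw [← ha] at h1
  rw [← hb] at h2
  simp only [smul_eq_mul] at h1 h2
  linarith

theorem ConvexOn.isSupermodular_card {α : Type*} [DecidableEq α] {f : ℝ → ℝ}
    (hf : ConvexOn ℝ (Set.Ici 0) f) : IsSupermodular fun S : Finset α => f #S := by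
  intro S T
  apply hf.add_le_add_of_add_eq (Set.mem_Ici.2 (Nat.cast_nonneg _))
    (Set.mem_Ici.2 (Nat.cast_nonneg _))
  · exact_mod_cast card_le_card inter_subset_left
  · exact_mod_cast card_le_card subset_union_left
  · exact_mod_cast (card_union_add_card_inter S T).symm

noncomputable def hinge (q : ℝ) (k : ℕ) (x : ℝ) : ℝ :=
  max (q * x) (2 * (x - k))

section hinge

variable {q : ℝ} {k : ℕ}

theorem convexOn_hinge : ConvexOn ℝ Set.univ (hinge q k) := by
  refine ConvexOn.sup ?_ ?_
  · exact (LinearMap.mul ℝ ℝ q).convexOn convex_univ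
  · refine (((LinearMap.mul ℝ ℝ 2).convexOn convex_univ).add_const (-(2 * k : ℝ))).congr ?_
    intro x _
    simp only [Pi.add_apply, LinearMap.mul_apply']
    ring

theorem hinge_natCast (hq : 0 ≤ q) (hqk : q * (k + 1) ≤ 2) (s : ℕ) :
    hinge q k s = if s ≤ k then q * s else 2 * (s - k) := by
  unfold hinge
  split_ifs with hs
  · have : (s : ℝ) ≤ k := by exact_mod_cast hs
    exact max_eq_left (by nlinarith)
  · have : (k : ℝ) + 1 ≤ s := by exact_mod_cast Nat.lt_of_not_le hs
    exact max_eq_right (by nlinarith)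

theorem hinge_le_one (hqk : q * k ≤ 1) : hinge q k k ≤ 1 := by
  rw [hinge, sub_self, mul_zero]
  exact max_le hqk zero_le_one

theorem one_add_hinge_le (hq0 : 0 ≤ q) (hq1 : q ≤ 1) {c d t : ℝ} (hd0 : 0 ≤ d)
    (hdk : d + 1 ≤ k) (hkc : k + 1 ≤ c) (hsum : c + d = k + t) :
    1 + hinge q k t ≤ hinge q k c + hinge q k d := by
  unfold hinge
  rw [← max_add_add_left]
  refine max_le ?_ ?_
  · have : q * (t - d) ≤ t - d := by nlinarith
    linarith [le_max_right (q * c) (2 * (c - k)), le_max_left (q * d) (2 * (d - k))]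
  · linarith [le_max_right (q * c) (2 * (c - k)), le_max_left (q * d) (2 * (d - k)),
      mul_nonneg hq0 hd0]

theorem isSupermodular_update_hinge_card {α : Type*} [DecidableEq α] {R : Finset α}
    (hR : #R = k) (hq0 : 0 ≤ q) (hq1 : q ≤ 1) (hqk : q * k ≤ 1) :
    IsSupermodular (Function.update (fun S : Finset α => hinge q k #S) R 1) := by
  subst hR
  refine (convexOn_hinge.subset (Set.subset_univ _) (convex_Ici 0)).isSupermodular_card.update
    (hinge_le_one hqk) fun T hTR hRT => ?_
  have hkc : #R < #(R ⊔ T) := card_lt_card (left_lt_sup.2 hTR)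
  have hdk : #(R ⊓ T) < #R := card_lt_card (inf_lt_left.2 hRT)
  refine one_add_hinge_le hq0 hq1 (Nat.cast_nonneg _) ?_ ?_ ?_
  · exact_mod_cast hdk
  · exact_mod_cast hkc
  · exact_mod_cast card_union_add_card_inter R T

end hinge

theorem stmt_12_general {α : Type*} [DecidableEq α] (E : Finset α) (n : ℕ)
    (R : Finset α) (hRcard : R.card = n / 2)
    (ε : ℝ) (hε : 0 < ε) (hε' : ε ≤ (n : ℝ) / ((n : ℝ) + 2))
    (g gR : Finset α → ℝ)
    (hg : ∀ S : Finset α, g S =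
      if S.card ≤ n / 2 then 2 * (S.card : ℝ) / (n : ℝ) * ε
      else 2 * ((S.card : ℝ) - ((n / 2 : ℕ) : ℝ)))
    (hgR : ∀ S : Finset α, gR S = if S = R then 1 else g S) :
    ∀ S T : Finset α, S ⊆ E → T ⊆ E →
      gR S + gR T ≤ gR (S ∪ T) + gR (S ∩ T) := by
  have hεn : ε * (n + 2) ≤ n := (le_div_iff₀ (by positivity)).1 hε'
  have hεn' : 0 ≤ ε * n := by positivity
  have hn0 : (0 : ℝ) < n := by linarith
  have hk : 2 * ((n / 2 : ℕ) : ℝ) ≤ n := by exact_mod_cast Nat.mul_div_le n 2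
  have hq0 : 0 ≤ 2 * ε / n := by positivity
  have hq1 : 2 * ε / n ≤ 1 := by rw [div_le_one hn0]; linarith
  have hqk : 2 * ε / n * (n / 2 : ℕ) ≤ 1 := by
    rw [div_mul_eq_mul_div, div_le_one hn0]
    nlinarith [mul_le_mul_of_nonneg_left hk hε.le]
  have hgR' : gR = Function.update (fun S => hinge (2 * ε / n) (n / 2) #S) R 1 := by
    funext S
    rw [hgR, hg, Function.update_apply, hinge_natCast hq0 (by linarith)]
    split_ifs <;> ring
  rw [hgR']
  exact fun S T _ _ => isSupermodular_update_hinge_card hRcard hq0 hq1 hqk S T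

theorem stmt_12 {α : Type*} [DecidableEq α] (E : Finset α) (n : ℕ) (hn : 2 ≤ n)
    (hE : E.card = n) (R : Finset α) (hR : R ⊆ E) (hRcard : R.card = n / 2)
    (ε : ℝ) (hε : 0 < ε) (hε' : ε ≤ (n : ℝ) / ((n : ℝ) + 2))
    (g gR : Finset α → ℝ)
    (hg : ∀ S : Finset α, g S =
      if S.card ≤ n / 2 then 2 * (S.card : ℝ) / (n : ℝ) * ε
      else 2 * ((S.card : ℝ) - ((n / 2 : ℕ) : ℝ)))
    (hgR : ∀ S : Finset α, gR S = if S = R then 1 else g S) :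
    ∀ S T : Finset α, S ⊆ E → T ⊆ E →
      gR S + gR T ≤ gR (S ∪ T) + gR (S ∩ T) :=
  stmt_12_general E n R hRcard ε hε hε' g gR hg hgR
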